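/- Dismantlability is preserved by foldings in the following sense: if G is a finite graph, v, w distinct vertices with N(v) ⊆ N(w), then G is dismantlable if and only if G \ v is dismantlable. -/

import Mathlib

structure LGraph (V : Type) where
  Adj : V → V → Prop
  symm : ∀ v w, Adj v w → Adj w v

def IsHom {V W : Type} (G : LGraph V) (H : LGraph W) (f : V → W) : Prop :=
  ∀ a b, G.Adj a b → H.Adj (f a) (f b)

def ExpAdj {VT VG : Type} (T : LGraph VT) (G : LGraph VG) (f g : VT → VG) : Prop :=
  ∀ t t', T.Adj t t' → G.Adj (f t) (g t')

def expGraph {VT VG : Type} (T : LGraph VT) (G : LGraph VG) : LGraph (VT → VG) :=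
  ⟨fun f g => ExpAdj T G f g, fun _ _ h t t' htt => G.symm _ _ (h t' t (T.symm _ _ htt))⟩

def prodG {VA VB : Type} (A : LGraph VA) (B : LGraph VB) : LGraph (VA × VB) :=
  ⟨fun p q => A.Adj p.1 q.1 ∧ B.Adj p.2 q.2,
   fun _ _ h => ⟨A.symm _ _ h.1, B.symm _ _ h.2⟩⟩

inductive Dismantles {V : Type} [DecidableEq V] (G : LGraph V) : Finset V → Prop
  | single (v : V) (hv : G.Adj v v) : Dismantles G {v}
  | fold (s : Finset V) (v w : V) (hv : v ∈ s) (hw : w ∈ s) (hvw : v ≠ w)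
      (hN : ∀ u ∈ s, G.Adj v u → G.Adj w u)
      (hrest : Dismantles G (s.erase v)) : Dismantles G s

def Dismantlable {V : Type} [DecidableEq V] (G : LGraph V) : Prop :=
  ∃ s : Finset V, (∀ v, v ∈ s) ∧ Dismantles G s

inductive WalkLen {V : Type} (A : V → V → Prop) : ℕ → V → V → Prop
  | zero (v : V) : WalkLen A 0 v v
  | succ {n : ℕ} {u v w : V} (h : A u v) (hw : WalkLen A n v w) : WalkLen A (n+1) u w

def deleteG {V : Type} (G : LGraph V) (v : V) : LGraph {u : V // u ≠ v} :=
  ⟨fun a b => G.Adj a b, fun _ _ h => G.symm _ _ h⟩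

lemma image_erase_injOn {V W : Type} [DecidableEq V] [DecidableEq W] {f : V → W}
    {s : Finset V} (hinj : Set.InjOn f s) {a : V} (ha : a ∈ s) :
    (s.erase a).image f = (s.image f).erase (f a) := by
  ext y
  simp only [Finset.mem_image, Finset.mem_erase]
  constructor
  · rintro ⟨x, ⟨hxa, hxs⟩, rfl⟩
    exact ⟨fun h => hxa (hinj hxs ha h), ⟨x, hxs, rfl⟩⟩
  · rintro ⟨hne, x, hxs, rfl⟩
    exact ⟨x, ⟨fun h => hne (by rw [h]), hxs⟩, rfl⟩

lemma dism_map {V W : Type} [DecidableEq V] [DecidableEq W] {G : LGraph V} {H : LGraph W}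
    (f : V → W) {s : Finset V} (hd : Dismantles G s) :
    ∀ (_ : Set.InjOn f s)
      (_ : ∀ a ∈ s, ∀ b ∈ s, (G.Adj a b ↔ H.Adj (f a) (f b))),
      Dismantles H (s.image f) := by
  induction hd with
  | single x hx =>
    intro _ hadj
    rw [Finset.image_singleton]
    exact .single _ ((hadj x (Finset.mem_singleton_self x) x (Finset.mem_singleton_self x)).mp hx)
  | fold s a b ha hb hab hdom _ ih =>
    intro hinj hadj
    refine .fold _ (f a) (f b) (Finset.mem_image_of_mem f ha) (Finset.mem_image_of_mem f hb)
      (fun h => hab (hinj ha hb h)) ?_ ?_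
    · intro u hu hadj'
      obtain ⟨u', hu', rfl⟩ := Finset.mem_image.mp hu
      exact (hadj b hb u' hu').mp (hdom u' hu' ((hadj a ha u' hu').mpr hadj'))
    · rw [← image_erase_injOn hinj ha]
      exact ih (hinj.mono (by intro x hx; exact Finset.mem_of_mem_erase hx))
        (fun x hx y hy => hadj x (Finset.mem_of_mem_erase hx) y (Finset.mem_of_mem_erase hy))

lemma swap_image_erase {V : Type} [DecidableEq V] {s : Finset V} {v w : V}
    (hv : v ∈ s) (hw : w ∈ s) (hvw : v ≠ w) :
    (s.erase w).image (Equiv.swap v w) = s.erase v := by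
  ext x
  simp only [Finset.mem_image, Finset.mem_erase]
  constructor
  · rintro ⟨y, ⟨hyw, hys⟩, rfl⟩
    by_cases hyv : y = v
    · subst hyv; rw [Equiv.swap_apply_left]; exact ⟨hvw.symm, hw⟩
    · rw [Equiv.swap_apply_of_ne_of_ne hyv hyw]; exact ⟨hyv, hys⟩
  · rintro ⟨hxv, hxs⟩
    by_cases hxw : x = w
    · refine ⟨v, ⟨hvw, hv⟩, ?_⟩
      rw [hxw]
      exact Equiv.swap_apply_left v w
    · exact ⟨x, ⟨hxw, hxs⟩, Equiv.swap_apply_of_ne_of_ne hxv hxw⟩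

lemma dism_erase {V : Type} [DecidableEq V] {G : LGraph V} {s : Finset V}
    (hd : Dismantles G s) :
    ∀ v w, v ∈ s → w ∈ s → v ≠ w → (∀ u ∈ s, G.Adj v u → G.Adj w u) →
      Dismantles G (s.erase v) := by
  induction hd with
  | single x _ =>
    intro v w hv hw hvw _
    rw [Finset.mem_singleton] at hv hw
    exact absurd (hv.trans hw.symm) hvw
  | fold s a b ha hb hab hdom hrest ih =>
    intro v w hv hw hvw hvwdom
    by_cases hav : a = v
    · exact hav ▸ hrest
    · -- a ≠ v, so v ∈ s.erase a
      have hv' : v ∈ s.erase a := Finset.mem_erase.mpr ⟨fun h => hav (h.symm), hv⟩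
      by_cases hwa : w = a
      · by_cases hbv : b = v
        · -- mutual domination: w(=a) and v(=b); use swap
          have hrest' : Dismantles G (s.erase w) := by rw [hwa]; exact hrest
          have hdomWV : ∀ u ∈ s, G.Adj w u → G.Adj v u := by
            intro u hu h
            rw [hwa] at h
            have h2 := hdom u hu h
            rw [hbv] at h2
            exact h2
          have hswap : Dismantles G ((s.erase w).image (Equiv.swap v w)) := by
            refine dism_map _ hrest' ((Equiv.swap v w).injective.injOn) ?_
            intro x hx y hy
            have hxw : x ≠ w := (Finset.mem_erase.mp hx).1
            have hyw : y ≠ w := (Finset.mem_erase.mp hy).1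
            have hxs : x ∈ s := Finset.mem_of_mem_erase hx
            have hys : y ∈ s := Finset.mem_of_mem_erase hy
            have key : ∀ z ∈ s, z ≠ w → (G.Adj v z ↔ G.Adj w z) := by
              intro z hz _
              exact ⟨fun h => hvwdom z hz h, fun h => hdomWV z hz h⟩
            by_cases hxv : x = v <;> by_cases hyv : y = v
            · rw [hxv, hyv, Equiv.swap_apply_left]
              constructor
              · intro h
                have h1 : G.Adj w v := hvwdom v hv h
                have h2 : G.Adj v w := G.symm _ _ h1
                exact hvwdom w hw h2
              · intro h
                have h1 : G.Adj v w := hdomWV w hw h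
                have h2 : G.Adj w v := G.symm _ _ h1
                exact hdomWV v hv h2
            · rw [hxv]
              rw [Equiv.swap_apply_left, Equiv.swap_apply_of_ne_of_ne hyv hyw]
              exact key y hys hyw
            · rw [hyv]
              rw [Equiv.swap_apply_left, Equiv.swap_apply_of_ne_of_ne hxv hxw]
              constructor
              · intro h; exact G.symm _ _ ((key x hxs hxw).mp (G.symm _ _ h))
              · intro h; exact G.symm _ _ ((key x hxs hxw).mpr (G.symm _ _ h))
            · rw [Equiv.swap_apply_of_ne_of_ne hxv hxw,
                Equiv.swap_apply_of_ne_of_ne hyv hyw]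
          rwa [swap_image_erase hv hw hvw] at hswap
        · -- w = a, b ≠ v: v dominated by b in s.erase a
          have hvb : v ≠ b := fun h => hbv h.symm
          have hb' : b ∈ s.erase a := Finset.mem_erase.mpr ⟨fun h => hab h.symm, hb⟩
          have hdom' : ∀ u ∈ s.erase a, G.Adj v u → G.Adj b u := by
            intro u hu h
            have h2 := hvwdom u (Finset.mem_of_mem_erase hu) h
            rw [hwa] at h2
            exact hdom u (Finset.mem_of_mem_erase hu) h2
          have step := ih v b hv' hb' hvb hdom'
          rw [Finset.erase_right_comm] at step
          refine .fold _ a b ?_ ?_ hab ?_ step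
          · exact Finset.mem_erase.mpr ⟨hav, ha⟩
          · exact Finset.mem_erase.mpr ⟨hbv, hb⟩
          · intro u hu h; exact hdom u (Finset.mem_of_mem_erase hu) h
      · -- w ≠ a
        have hw' : w ∈ s.erase a := Finset.mem_erase.mpr ⟨hwa, hw⟩
        have step := ih v w hv' hw' hvw
          (fun u hu h => hvwdom u (Finset.mem_of_mem_erase hu) h)
        rw [Finset.erase_right_comm] at step
        by_cases hbv : b = v
        · -- a dominated by v dominated by w, and a ≠ w
          refine .fold _ a w (Finset.mem_erase.mpr ⟨hav, ha⟩)
            (Finset.mem_erase.mpr ⟨Ne.symm hvw, hw⟩)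
            (fun h => hwa h.symm) ?_ step
          intro u hu h
          have h2 := hdom u (Finset.mem_of_mem_erase hu) h
          rw [hbv] at h2
          exact hvwdom u (Finset.mem_of_mem_erase hu) h2
        · refine .fold _ a b (Finset.mem_erase.mpr ⟨hav, ha⟩)
            (Finset.mem_erase.mpr ⟨hbv, hb⟩) hab ?_ step
          intro u hu h
          exact hdom u (Finset.mem_of_mem_erase hu) h

theorem stmt7 {V : Type} [Fintype V] [DecidableEq V] (G : LGraph V) (v w : V)
    (hvw : v ≠ w) (hN : ∀ u, G.Adj v u → G.Adj w u) :
    Dismantlable G ↔ Dismantlable (deleteG G v) := by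
  constructor
  · rintro ⟨s, hall, hd⟩
    have herase : Dismantles G (s.erase v) :=
      dism_erase hd v w (hall v) (hall w) hvw (fun u _ h => hN u h)
    set f : V → {u : V // u ≠ v} :=
      fun u => if h : u = v then ⟨w, fun h' => hvw h'.symm⟩ else ⟨u, h⟩ with hf
    refine ⟨(s.erase v).image f, ?_, ?_⟩
    · rintro ⟨u, hu⟩
      refine Finset.mem_image.mpr ⟨u, Finset.mem_erase.mpr ⟨hu, hall u⟩, ?_⟩
      simp [hf, hu]
    · refine dism_map f herase ?_ ?_
      · intro x hx y hy hxy
        have hxv : x ≠ v := (Finset.mem_erase.mp hx).1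
        have hyv : y ≠ v := (Finset.mem_erase.mp hy).1
        simpa [hf, hxv, hyv] using congrArg Subtype.val hxy
      · intro x hx y hy
        have hxv : x ≠ v := (Finset.mem_erase.mp hx).1
        have hyv : y ≠ v := (Finset.mem_erase.mp hy).1
        simp [hf, hxv, hyv, deleteG]
  · rintro ⟨t, hall, hd⟩
    have himg : Dismantles G (t.image Subtype.val) := by
      refine dism_map Subtype.val hd (Subtype.val_injective.injOn) ?_
      intro a _ b _
      simp [deleteG]
    have himg' : t.image Subtype.val = Finset.univ.erase v := by
      ext u
      simp only [Finset.mem_image, Finset.mem_erase, Finset.mem_univ, and_true]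
      constructor
      · rintro ⟨⟨a, ha⟩, _, rfl⟩; exact ha
      · intro hu; exact ⟨⟨u, hu⟩, hall _, rfl⟩
    rw [himg'] at himg
    refine ⟨Finset.univ, fun x => Finset.mem_univ x, ?_⟩
    exact .fold _ v w (Finset.mem_univ v) (Finset.mem_univ w) hvw
      (fun u _ h => hN u h) himg
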